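/- arXiv:1612.01209 — 6 statements merged into one kernel-verified Lean document; each statement's English description precedes it below -/
import Mathlib

section
/- If $0 < w_I \leq \frac{r_0 w_V v_2}{r_I(v_1+v_2)}$ and $r_I > r_0$, with all quantities positive, then for any nonnegative reals $l_1,\dots,l_{n-1}$, $\frac{\sum_{i=1}^{n-1}\min\{l_i, 2r_I\} + 2r_I}{v_2} w_I \leq \frac{\sum_{i=1}^{n-1}\min\{l_i, 2r_0\} + 2r_0}{v_1+v_2} w_V$. -/
/-!
Truncating at a larger radius grows a truncated length by at most the ratio of the radii:
`r₀ · min(l, 2r_I) ≤ r_I · min(l, 2r₀)`. Summing, the left-hand total is at most `r_I / r₀` times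
the right-hand one, and the hypothesis on `w_I` absorbs exactly this factor.
-/

open Finset

theorem mul_min_le_mul_min {a b x : ℝ} (ha : 0 ≤ a) (hab : a ≤ b) (hx : 0 ≤ x) :
    a * min x b ≤ b * min x a := by
  rcases le_total x a with hxa | hax
  · rw [min_eq_left hxa, min_eq_left (hxa.trans hab)]
    exact mul_le_mul_of_nonneg_right hab hx
  · rw [min_eq_right hax, mul_comm b a]
    exact mul_le_mul_of_nonneg_left (min_le_right x b) ha

theorem mul_sum_min_add_le {ι : Type*} (s : Finset ι) (f : ι → ℝ) (hf : ∀ i, 0 ≤ f i)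
    {a b : ℝ} (ha : 0 ≤ a) (hab : a ≤ b) :
    a * (∑ i ∈ s, min (f i) b + b) ≤ b * (∑ i ∈ s, min (f i) a + a) := by
  rw [mul_add, mul_add, mul_sum, mul_sum, mul_comm a b]
  exact add_le_add_left (sum_le_sum fun i _ => mul_min_le_mul_min ha hab (hf i)) _

theorem sum_min_add_nonneg {ι : Type*} (s : Finset ι) (f : ι → ℝ) (hf : ∀ i, 0 ≤ f i)
    {b : ℝ} (hb : 0 ≤ b) : 0 ≤ ∑ i ∈ s, min (f i) b + b :=
  add_nonneg (sum_nonneg fun i _ => le_min (hf i) hb) hb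

theorem stmt0_general (n : ℕ) (rI r0 v1 v2 wI wV : ℝ)
    (hr0 : 0 < r0) (hrIr0 : r0 < rI) (hv1 : 0 < v1) (hv2 : 0 < v2)
    (hwV : 0 < wV)
    (hwIle : wI ≤ r0 * wV * v2 / (rI * (v1 + v2)))
    (l : ℕ → ℝ) (hl : ∀ i, 0 ≤ l i) :
    ((∑ i ∈ Finset.Ico 1 n, min (l i) (2 * rI)) + 2 * rI) / v2 * wI ≤
      ((∑ i ∈ Finset.Ico 1 n, min (l i) (2 * r0)) + 2 * r0) / (v1 + v2) * wV := by
  set SI := (∑ i ∈ Ico 1 n, min (l i) (2 * rI)) + 2 * rI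
  set S0 := (∑ i ∈ Ico 1 n, min (l i) (2 * r0)) + 2 * r0
  have hrI : 0 < rI := hr0.trans hrIr0
  have hSI : 0 ≤ SI := sum_min_add_nonneg _ l hl (by positivity)
  have hS : r0 * SI ≤ rI * S0 := by
    have := mul_sum_min_add_le (Ico 1 n) l hl (a := 2 * r0) (b := 2 * rI) (by positivity)
      (by linarith)
    linarith
  calc SI / v2 * wI ≤ SI / v2 * (r0 * wV * v2 / (rI * (v1 + v2))) := by gcongr
    _ = r0 * SI * (wV / (rI * (v1 + v2))) := by field_simp
    _ ≤ rI * S0 * (wV / (rI * (v1 + v2))) := by gcongr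
    _ = S0 / (v1 + v2) * wV := by field_simp

theorem stmt0 (n : ℕ) (hn : 1 ≤ n) (rI r0 v1 v2 wI wV : ℝ)
    (hr0 : 0 < r0) (hrIr0 : r0 < rI) (hv1 : 0 < v1) (hv2 : 0 < v2)
    (hwV : 0 < wV) (hwI : 0 < wI)
    (hwIle : wI ≤ r0 * wV * v2 / (rI * (v1 + v2)))
    (l : ℕ → ℝ) (hl : ∀ i, 0 ≤ l i) :
    ((∑ i ∈ Finset.Ico 1 n, min (l i) (2 * rI)) + 2 * rI) / v2 * wI ≤
      ((∑ i ∈ Finset.Ico 1 n, min (l i) (2 * r0)) + 2 * r0) / (v1 + v2) * wV :=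
  stmt0_general n rI r0 v1 v2 wI wV hr0 hrIr0 hv1 hv2 hwV hwIle l hl
end

section
/- Consider the linear program: maximize $\sum_{i=1}^n Y_i$ subject to $0 \le D_i \le \frac{2r_I}{v_2}w_I$ for all $i$; $\sum_{i=k_1}^{k_2} D_i \le \frac{\sum_{i=k_1}^{k_2-1}\min\{l_i,2r_I\} + 2r_I}{v_2}w_I$ for all $1\le k_1\le k_2\le n$; $0 \le Y_i \le \frac{2r_0}{v_1+v_2}w_V$ for all $i$; $Y_i \le D_i$ for all $i$; and $\sum_{i=k_1}^{k_2} Y_i \le \frac{\sum_{i=k_1}^{k_2-1}\min\{l_i,2r_0\} + 2r_0}{v_1+v_2}w_V$ for all $1\le k_1\le k_2\le n$. If $0 < w_I \le \frac{r_0 w_V v_2}{r_I(v_1+v_2)}$ and $r_I > r_0$, then the optimal value equals $\frac{\sum_{i=1}^{n-1}\min\{l_i,2r_I\} + 2r_I}{v_2}w_I$. -/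
/-!
Summing `Y i ≤ D i` and applying the window constraint on `D` over `[1, n]` bounds the
objective by the claimed value. It is attained by `D = Y` giving helper `1` the amount `2 rI`
and helper `i + 1` the amount `min (l i) (2 rI)`, both scaled by `wI / v2`. The hypothesis on
`wI` says `rI * (wI / v2) ≤ r0 * (wV / (v1 + v2))`; since `r0 < rI` this also gives
`wI / v2 ≤ wV / (v1 + v2)`, and together they put each window bound of this `D` below the
corresponding window bound on `Y`.
-/

/-- Feasibility for the LP: variables `D i`, `Y i` for `i = 1,…,n`, with
inter-vehicle distances `l i` between helper `i` and helper `i+1`. -/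
def Feasible (n : ℕ) (l D Y : ℕ → ℝ) (rI r0 v1 v2 wI wV : ℝ) : Prop :=
  (∀ i, 1 ≤ i → i ≤ n → 0 ≤ D i ∧ D i ≤ 2 * rI / v2 * wI) ∧
  (∀ k1 k2, 1 ≤ k1 → k1 ≤ k2 → k2 ≤ n →
    ∑ i ∈ Finset.Icc k1 k2, D i ≤
      ((∑ i ∈ Finset.Ico k1 k2, min (l i) (2 * rI)) + 2 * rI) / v2 * wI) ∧
  (∀ i, 1 ≤ i → i ≤ n → 0 ≤ Y i ∧ Y i ≤ 2 * r0 / (v1 + v2) * wV) ∧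
  (∀ i, 1 ≤ i → i ≤ n → Y i ≤ D i) ∧
  (∀ k1 k2, 1 ≤ k1 → k1 ≤ k2 → k2 ≤ n →
    ∑ i ∈ Finset.Icc k1 k2, Y i ≤
      ((∑ i ∈ Finset.Ico k1 k2, min (l i) (2 * r0)) + 2 * r0) / (v1 + v2) * wV)

open Finset

lemma sum_Icc_eq_add_sum_Ico_succ {M : Type*} [AddCommMonoid M] (f : ℕ → M) {a b : ℕ}
    (hab : a ≤ b) : ∑ i ∈ Icc a b, f i = f a + ∑ i ∈ Ico a b, f (i + 1) := by
  rw [← add_sum_Ioc_eq_sum_Icc hab, sum_Ico_add', Ico_add_one_add_one_eq_Ioc]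

def coverageIncrement (l : ℕ → ℝ) (r : ℝ) : ℕ → ℝ
  | 0 | 1 => 2 * r -- helpers are indexed from `1`; the value at `0` is never used
  | i + 2 => min (l (i + 1)) (2 * r)

namespace coverageIncrement

variable {l : ℕ → ℝ} {r : ℝ}

lemma succ_of_one_le {i : ℕ} (hi : 1 ≤ i) :
    coverageIncrement l r (i + 1) = min (l i) (2 * r) := by
  obtain ⟨j, rfl⟩ := Nat.exists_eq_add_of_le' hi
  rfl

lemma nonneg (hl : ∀ i, 0 ≤ l i) (hr : 0 ≤ r) (i : ℕ) : 0 ≤ coverageIncrement l r i := by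
  rcases i with _ | _ | i
  · exact mul_nonneg zero_le_two hr
  · exact mul_nonneg zero_le_two hr
  · exact le_min (hl _) (mul_nonneg zero_le_two hr)

lemma le_two_mul (i : ℕ) : coverageIncrement l r i ≤ 2 * r := by
  rcases i with _ | _ | i
  · rfl
  · rfl
  · exact min_le_right _ _

lemma sum_Icc {a b : ℕ} (ha : 1 ≤ a) (hab : a ≤ b) :
    ∑ i ∈ Icc a b, coverageIncrement l r i =
      coverageIncrement l r a + ∑ i ∈ Ico a b, min (l i) (2 * r) := by
  rw [sum_Icc_eq_add_sum_Ico_succ _ hab]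
  congr 1
  exact sum_congr rfl fun i hi => succ_of_one_le (ha.trans (mem_Ico.mp hi).1)

lemma sum_Icc_le {a b : ℕ} (ha : 1 ≤ a) (hab : a ≤ b) :
    ∑ i ∈ Icc a b, coverageIncrement l r i ≤ ∑ i ∈ Ico a b, min (l i) (2 * r) + 2 * r := by
  rw [sum_Icc ha hab, add_comm]
  gcongr
  exact le_two_mul a

lemma sum_Icc_one {b : ℕ} (hb : 1 ≤ b) :
    ∑ i ∈ Icc 1 b, coverageIncrement l r i = ∑ i ∈ Ico 1 b, min (l i) (2 * r) + 2 * r := by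
  rw [sum_Icc le_rfl hb, add_comm]
  rfl

end coverageIncrement

lemma min_mul_le_min_mul {x R ρ a b : ℝ} (hx : 0 ≤ x) (ha : 0 ≤ a) (hρ : 0 < ρ)
    (hρR : ρ ≤ R) (h : R * a ≤ ρ * b) : min x R * a ≤ min x ρ * b := by
  rcases le_total x ρ with hxρ | hρx
  · have hab : a ≤ b := le_of_mul_le_mul_left ((mul_le_mul_of_nonneg_right hρR ha).trans h) hρ
    rw [min_eq_left hxρ, min_eq_left (hxρ.trans hρR)]
    exact mul_le_mul_of_nonneg_left hab hx
  · rw [min_eq_right hρx]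
    exact (mul_le_mul_of_nonneg_right (min_le_right x R) ha).trans h

lemma window_mul_le_window_mul (l : ℕ → ℝ) (hl : ∀ i, 0 ≤ l i) (s : Finset ℕ) {R ρ a b : ℝ}
    (ha : 0 ≤ a) (hρ : 0 < ρ) (hρR : ρ ≤ R) (h : R * a ≤ ρ * b) :
    (∑ i ∈ s, min (l i) (2 * R) + 2 * R) * a ≤ (∑ i ∈ s, min (l i) (2 * ρ) + 2 * ρ) * b := by
  have h2 : 2 * R * a ≤ 2 * ρ * b := by linarith
  rw [add_mul, add_mul, sum_mul, sum_mul]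
  refine add_le_add (sum_le_sum fun i _ => ?_) h2
  exact min_mul_le_min_mul (hl i) ha (by linarith) (by linarith) h2

section Feasible

variable {n : ℕ} {l : ℕ → ℝ} {rI r0 v1 v2 wI wV : ℝ}

lemma sum_Icc_le_of_feasible {D Y : ℕ → ℝ} (hn : 1 ≤ n)
    (h : Feasible n l D Y rI r0 v1 v2 wI wV) :
    ∑ i ∈ Icc 1 n, Y i ≤ (∑ i ∈ Ico 1 n, min (l i) (2 * rI) + 2 * rI) / v2 * wI :=
  calc ∑ i ∈ Icc 1 n, Y i
      ≤ ∑ i ∈ Icc 1 n, D i := sum_le_sum fun i hi =>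
        h.2.2.2.1 i (mem_Icc.mp hi).1 (mem_Icc.mp hi).2
    _ ≤ _ := h.2.1 1 n le_rfl hn le_rfl

lemma feasible_coverageIncrement (hl : ∀ i, 0 ≤ l i) (hr0 : 0 < r0) (hr0rI : r0 ≤ rI)
    (hv2 : 0 < v2) (hwI : 0 ≤ wI) (hrate : rI * (wI / v2) ≤ r0 * (wV / (v1 + v2))) :
    Feasible n l (fun i => coverageIncrement l rI i / v2 * wI)
      (fun i => coverageIncrement l rI i / v2 * wI) rI r0 v1 v2 wI wV := by
  have ha : 0 ≤ wI / v2 := div_nonneg hwI hv2.le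
  have hI : ∀ t, t / v2 * wI = t * (wI / v2) := fun t => by ring
  have hV : ∀ t, t / (v1 + v2) * wV = t * (wV / (v1 + v2)) := fun t => by ring
  have hwindow (s : Finset ℕ) := window_mul_le_window_mul l hl s ha hr0 hr0rI hrate
  have hle (i : ℕ) :=
    mul_le_mul_of_nonneg_right (coverageIncrement.le_two_mul (l := l) (r := rI) i) ha
  have hnonneg (i : ℕ) :=
    mul_nonneg (coverageIncrement.nonneg hl (hr0.le.trans hr0rI) i) ha
  have hsum {k1 k2 : ℕ} (h1 : 1 ≤ k1) (h12 : k1 ≤ k2) :=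
    mul_le_mul_of_nonneg_right (coverageIncrement.sum_Icc_le (l := l) (r := rI) h1 h12) ha
  simp only [Feasible, hI, hV, ← sum_mul]
  refine ⟨fun i _ _ => ⟨hnonneg i, hle i⟩, fun k1 k2 h1 h12 _ => hsum h1 h12,
    fun i _ _ => ⟨hnonneg i, (hle i).trans ?_⟩, fun _ _ _ => le_rfl,
    fun k1 k2 h1 h12 _ => (hsum h1 h12).trans (hwindow _)⟩
  simpa using hwindow ∅

lemma sum_Icc_coverageIncrement (hn : 1 ≤ n) :
    ∑ i ∈ Icc 1 n, coverageIncrement l rI i / v2 * wI =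
      (∑ i ∈ Ico 1 n, min (l i) (2 * rI) + 2 * rI) / v2 * wI := by
  rw [← sum_mul, ← sum_div, coverageIncrement.sum_Icc_one hn]

end Feasible

theorem stmt2_general (n : ℕ) (hn : 1 ≤ n) (rI r0 v1 v2 wI wV : ℝ)
    (hr0 : 0 < r0) (hrIr0 : r0 < rI) (hv1 : 0 < v1) (hv2 : 0 < v2)
    (hwI : 0 < wI)
    (hwIle : wI ≤ r0 * wV * v2 / (rI * (v1 + v2)))
    (l : ℕ → ℝ) (hl : ∀ i, 0 ≤ l i) :
    IsGreatest
      {S : ℝ | ∃ D Y : ℕ → ℝ, Feasible n l D Y rI r0 v1 v2 wI wV ∧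
        S = ∑ i ∈ Finset.Icc 1 n, Y i}
      (((∑ i ∈ Finset.Ico 1 n, min (l i) (2 * rI)) + 2 * rI) / v2 * wI) := by
  have hrI : 0 < rI := hr0.trans hrIr0
  have hrate : rI * (wI / v2) ≤ r0 * (wV / (v1 + v2)) :=
    calc rI * (wI / v2) ≤ rI * (r0 * wV * v2 / (rI * (v1 + v2)) / v2) := by gcongr
      _ = r0 * (wV / (v1 + v2)) := by field_simp
  refine ⟨⟨_, _, feasible_coverageIncrement hl hr0 hrIr0.le hv2 hwI.le hrate,
    (sum_Icc_coverageIncrement hn).symm⟩, ?_⟩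
  rintro S ⟨D, Y, hfeas, rfl⟩
  exact sum_Icc_le_of_feasible hn hfeas

theorem stmt2 (n : ℕ) (hn : 1 ≤ n) (rI r0 v1 v2 wI wV : ℝ)
    (hr0 : 0 < r0) (hrIr0 : r0 < rI) (hv1 : 0 < v1) (hv2 : 0 < v2)
    (hwV : 0 < wV) (hwI : 0 < wI)
    (hwIle : wI ≤ r0 * wV * v2 / (rI * (v1 + v2)))
    (l : ℕ → ℝ) (hl : ∀ i, 0 ≤ l i) :
    IsGreatest
      {S : ℝ | ∃ D Y : ℕ → ℝ, Feasible n l D Y rI r0 v1 v2 wI wV ∧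
        S = ∑ i ∈ Finset.Icc 1 n, Y i}
      (((∑ i ∈ Finset.Ico 1 n, min (l i) (2 * rI)) + 2 * rI) / v2 * wI) :=
  stmt2_general n hn rI r0 v1 v2 wI wV hr0 hrIr0 hv1 hv2 hwI hwIle l hl
end

section
/- Under the constraints of the same linear program (maximize $\sum_{i=1}^n Y_i$ subject to the V2I and V2V constraints), if $w_I \ge \frac{w_V v_2}{v_1+v_2}$ and $r_I > r_0 > 0$, then the optimal value equals $\frac{\sum_{i=1}^{n-1}\min\{l_i,2r_0\} + 2r_0}{v_1+v_2}w_V$. -/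
open Finset

lemma sum_Icc_eq_add_sum_Ico {M : Type*} [AddCommMonoid M] (f : ℕ → M) {k1 k2 : ℕ}
    (h : k1 ≤ k2) : ∑ i ∈ Icc k1 k2, f i = f k1 + ∑ j ∈ Ico k1 k2, f (j + 1) := by
  rw [← add_sum_Ioc_eq_sum_Icc h, ← Ico_add_one_add_one_eq_Ioc, sum_Ico_add']

def windowBudget (l : ℕ → ℝ) (r : ℝ) (k1 k2 : ℕ) : ℝ :=
  ∑ j ∈ Ico k1 k2, min (l j) (2 * r) + 2 * r

def greedyLoad (l : ℕ → ℝ) (r : ℝ) (i : ℕ) : ℝ :=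
  if i ≤ 1 then 2 * r else min (l (i - 1)) (2 * r)

section

variable {l : ℕ → ℝ} {r : ℝ}

@[simp]
lemma windowBudget_self (k : ℕ) : windowBudget l r k k = 2 * r := by
  simp [windowBudget]

lemma windowBudget_mono {r' : ℝ} (h : r ≤ r') (k1 k2 : ℕ) :
    windowBudget l r k1 k2 ≤ windowBudget l r' k1 k2 := by
  unfold windowBudget
  gcongr

lemma greedyLoad_nonneg (hl : ∀ i, 0 ≤ l i) (hr : 0 ≤ r) (i : ℕ) :
    0 ≤ greedyLoad l r i := by
  unfold greedyLoad
  split_ifs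
  · linarith
  · exact le_min (hl _) (by linarith)

lemma greedyLoad_le (i : ℕ) : greedyLoad l r i ≤ 2 * r := by
  unfold greedyLoad
  split_ifs
  · exact le_rfl
  · exact min_le_right _ _

lemma sum_Icc_greedyLoad {k1 k2 : ℕ} (h1 : 1 ≤ k1) (h12 : k1 ≤ k2) :
    ∑ i ∈ Icc k1 k2, greedyLoad l r i =
      greedyLoad l r k1 + ∑ j ∈ Ico k1 k2, min (l j) (2 * r) := by
  rw [sum_Icc_eq_add_sum_Ico _ h12]
  congr 1
  refine sum_congr rfl fun j hj => ?_
  have : ¬ j + 1 ≤ 1 := by simp only [mem_Ico] at hj; omega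
  simp [greedyLoad, this]

lemma sum_Icc_greedyLoad_le {k1 k2 : ℕ} (h1 : 1 ≤ k1) (h12 : k1 ≤ k2) :
    ∑ i ∈ Icc k1 k2, greedyLoad l r i ≤ windowBudget l r k1 k2 := by
  rw [sum_Icc_greedyLoad h1 h12, windowBudget, add_comm]
  gcongr
  exact greedyLoad_le k1

lemma sum_Icc_one_greedyLoad {n : ℕ} (hn : 1 ≤ n) :
    ∑ i ∈ Icc 1 n, greedyLoad l r i = windowBudget l r 1 n := by
  rw [sum_Icc_greedyLoad le_rfl hn, windowBudget, add_comm]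
  simp [greedyLoad]

end

lemma feasible_greedyLoad {n : ℕ} {l : ℕ → ℝ} {rI r0 v1 v2 wI wV : ℝ} (hl : ∀ i, 0 ≤ l i)
    (hr0 : 0 ≤ r0) (hrI : r0 ≤ rI) (hc : 0 ≤ wV / (v1 + v2)) (hcI : wV / (v1 + v2) ≤ wI / v2) :
    Feasible n l (fun i => wV / (v1 + v2) * greedyLoad l r0 i)
      (fun i => wV / (v1 + v2) * greedyLoad l r0 i) rI r0 v1 v2 wI wV := by
  set c := wV / (v1 + v2)
  have hV2I : ∀ k1 k2, 1 ≤ k1 → k1 ≤ k2 →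
      ∑ i ∈ Icc k1 k2, c * greedyLoad l r0 i ≤ windowBudget l rI k1 k2 / v2 * wI := by
    intro k1 k2 h1 h12
    calc ∑ i ∈ Icc k1 k2, c * greedyLoad l r0 i
        = c * ∑ i ∈ Icc k1 k2, greedyLoad l r0 i := (mul_sum _ _ _).symm
      _ ≤ wI / v2 * windowBudget l rI k1 k2 :=
          mul_le_mul hcI ((sum_Icc_greedyLoad_le h1 h12).trans (windowBudget_mono hrI k1 k2))
            (sum_nonneg fun i _ => greedyLoad_nonneg hl hr0 i) (hc.trans hcI)
      _ = windowBudget l rI k1 k2 / v2 * wI := by ring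
  have hV2V : ∀ k1 k2, 1 ≤ k1 → k1 ≤ k2 →
      ∑ i ∈ Icc k1 k2, c * greedyLoad l r0 i ≤ windowBudget l r0 k1 k2 / (v1 + v2) * wV := by
    intro k1 k2 h1 h12
    calc ∑ i ∈ Icc k1 k2, c * greedyLoad l r0 i
        = c * ∑ i ∈ Icc k1 k2, greedyLoad l r0 i := (mul_sum _ _ _).symm
      _ ≤ c * windowBudget l r0 k1 k2 :=
          mul_le_mul_of_nonneg_left (sum_Icc_greedyLoad_le h1 h12) hc
      _ = windowBudget l r0 k1 k2 / (v1 + v2) * wV := by ring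
  have hnonneg : ∀ i, 0 ≤ c * greedyLoad l r0 i :=
    fun i => mul_nonneg hc (greedyLoad_nonneg hl hr0 i)
  refine ⟨fun i h1 _ => ⟨hnonneg i, ?_⟩, fun k1 k2 h1 h12 _ => hV2I k1 k2 h1 h12,
    fun i h1 _ => ⟨hnonneg i, ?_⟩, fun i _ _ => le_rfl, fun k1 k2 h1 h12 _ => hV2V k1 k2 h1 h12⟩
  · simpa using hV2I i i h1 le_rfl
  · simpa using hV2V i i h1 le_rfl

theorem stmt3_general (n : ℕ) (hn : 1 ≤ n) (rI r0 v1 v2 wI wV : ℝ)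
    (hr0 : 0 < r0) (hrIr0 : r0 < rI) (hv1 : 0 < v1) (hv2 : 0 < v2)
    (hwV : 0 < wV)
    (hwIge : wV * v2 / (v1 + v2) ≤ wI)
    (l : ℕ → ℝ) (hl : ∀ i, 0 ≤ l i) :
    IsGreatest
      {S : ℝ | ∃ D Y : ℕ → ℝ, Feasible n l D Y rI r0 v1 v2 wI wV ∧
        S = ∑ i ∈ Finset.Icc 1 n, Y i}
      (((∑ i ∈ Finset.Ico 1 n, min (l i) (2 * r0)) + 2 * r0) / (v1 + v2) * wV) := by
  have hc : 0 ≤ wV / (v1 + v2) := by positivity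
  have hcI : wV / (v1 + v2) ≤ wI / v2 :=
    calc wV / (v1 + v2) = wV * v2 / (v1 + v2) / v2 := by field_simp
      _ ≤ wI / v2 := by gcongr
  refine ⟨⟨_, _, feasible_greedyLoad hl hr0.le hrIr0.le hc hcI, ?_⟩, ?_⟩
  · rw [← mul_sum, sum_Icc_one_greedyLoad hn, windowBudget]
    ring
  · rintro S ⟨D, Y, hF, rfl⟩
    exact hF.2.2.2.2 1 n le_rfl hn le_rfl

theorem stmt3 (n : ℕ) (hn : 1 ≤ n) (rI r0 v1 v2 wI wV : ℝ)
    (hr0 : 0 < r0) (hrIr0 : r0 < rI) (hv1 : 0 < v1) (hv2 : 0 < v2)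
    (hwV : 0 < wV) (hwI : 0 < wI)
    (hwIge : wV * v2 / (v1 + v2) ≤ wI)
    (l : ℕ → ℝ) (hl : ∀ i, 0 ≤ l i) :
    IsGreatest
      {S : ℝ | ∃ D Y : ℕ → ℝ, Feasible n l D Y rI r0 v1 v2 wI wV ∧
        S = ∑ i ∈ Finset.Icc 1 n, Y i}
      (((∑ i ∈ Finset.Ico 1 n, min (l i) (2 * r0)) + 2 * r0) / (v1 + v2) * wV) :=
  stmt3_general n hn rI r0 v1 v2 wI wV hr0 hrIr0 hv1 hv2 hwV hwIge l hl
end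

section
/- The assignment $Y_i = D_i = \frac{\min\{l_i, 2r_I\}}{v_2}w_I$ for $i=1,\dots,n-1$ and $Y_n = D_n = \frac{2r_I}{v_2}w_I$ is feasible for the linear program (satisfies all five constraint families) whenever $0 < w_I \le \frac{r_0 w_V v_2}{r_I(v_1+v_2)}$ and $r_I > r_0 > 0$. -/
open Finset

theorem min_mul_le_min_mul_s4 {a b c α β : ℝ} (ha : 0 ≤ a) (hb : 0 < b) (hcb : c ≤ b)
    (hα : 0 ≤ α) (hβ : 0 ≤ β) (h : b * α ≤ c * β) : min a b * α ≤ min a c * β := by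
  rcases le_total a c with hac | hca
  · have hαβ : α ≤ β := le_of_mul_le_mul_left (by nlinarith) hb
    rw [min_eq_left hac]
    calc min a b * α ≤ a * α := by gcongr; exact min_le_left a b
      _ ≤ a * β := by gcongr
  · rw [min_eq_right hca]
    calc min a b * α ≤ b * α := by gcongr; exact min_le_right a b
      _ ≤ c * β := h

theorem sum_Icc_le_div_mul {n k1 k2 : ℕ} {x m : ℕ → ℝ} {R v w : ℝ}
    (hk12 : k1 ≤ k2) (hk2 : k2 ≤ n) (hx : ∀ i < n, x i ≤ m i / v * w) (hlast : x k2 ≤ R / v * w) :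
    ∑ i ∈ Icc k1 k2, x i ≤ (∑ i ∈ Ico k1 k2, m i + R) / v * w := by
  rw [← Ico_add_one_right_eq_Icc, sum_Ico_succ_top hk12, add_div, add_mul, sum_div, sum_mul]
  gcongr with i hi
  exact hx i ((mem_Ico.mp hi).2.trans_le hk2)

theorem feasible_of_le {n : ℕ} {l x : ℕ → ℝ} {rI r0 v1 v2 wI wV : ℝ}
    (hx0 : ∀ i, 0 ≤ x i) (hxcap : ∀ i, x i ≤ 2 * rI / v2 * wI)
    (hcap : 2 * rI / v2 * wI ≤ 2 * r0 / (v1 + v2) * wV)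
    (hxD : ∀ i < n, x i ≤ min (l i) (2 * rI) / v2 * wI)
    (hxY : ∀ i < n, x i ≤ min (l i) (2 * r0) / (v1 + v2) * wV) :
    Feasible n l x x rI r0 v1 v2 wI wV :=
  ⟨fun i _ _ => ⟨hx0 i, hxcap i⟩,
    fun _ _ _ hk12 hk2 => sum_Icc_le_div_mul hk12 hk2 hxD (hxcap _),
    fun i _ _ => ⟨hx0 i, (hxcap i).trans hcap⟩,
    fun _ _ _ => le_rfl,
    fun _ _ _ hk12 hk2 => sum_Icc_le_div_mul hk12 hk2 hxY ((hxcap _).trans hcap)⟩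

theorem stmt4_general (n : ℕ) (rI r0 v1 v2 wI wV : ℝ)
    (hr0 : 0 < r0) (hrIr0 : r0 < rI) (hv1 : 0 < v1) (hv2 : 0 < v2)
    (hwV : 0 < wV) (hwI : 0 < wI)
    (hwIle : wI ≤ r0 * wV * v2 / (rI * (v1 + v2)))
    (l : ℕ → ℝ) (hl : ∀ i, 0 ≤ l i) :
    Feasible n l
      (fun i => if i = n then 2 * rI / v2 * wI else min (l i) (2 * rI) / v2 * wI)
      (fun i => if i = n then 2 * rI / v2 * wI else min (l i) (2 * rI) / v2 * wI)
      rI r0 v1 v2 wI wV := by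
  have hrI : 0 < rI := hr0.trans hrIr0
  have hv12 : 0 < v1 + v2 := by linarith
  have hrate : 2 * rI * (wI / v2) ≤ 2 * r0 * (wV / (v1 + v2)) := by
    rw [le_div_iff₀ (by positivity)] at hwIle
    rw [← mul_div_assoc, ← mul_div_assoc, div_le_div_iff₀ hv2 hv12]
    linarith
  have hterm : ∀ a, 0 ≤ a → min a (2 * rI) / v2 * wI ≤ min a (2 * r0) / (v1 + v2) * wV := by
    intro a ha
    simpa only [div_mul_eq_mul_div, mul_div_assoc] using
      min_mul_le_min_mul_s4 ha (by positivity) (by linarith) (by positivity) (by positivity) hrate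
  have hcap : 2 * rI / v2 * wI ≤ 2 * r0 / (v1 + v2) * wV := by
    simpa only [min_self, min_eq_right (by linarith : 2 * r0 ≤ 2 * rI)] using
      hterm (2 * rI) (by positivity)
  have hmin_le (i : ℕ) : min (l i) (2 * rI) / v2 * wI ≤ 2 * rI / v2 * wI := by
    gcongr; exact min_le_right _ _
  have hxD : ∀ i < n, (if i = n then 2 * rI / v2 * wI else min (l i) (2 * rI) / v2 * wI)
      ≤ min (l i) (2 * rI) / v2 * wI := fun i hi => by rw [if_neg hi.ne]
  refine feasible_of_le (fun i => ?_) (fun i => ?_) hcap hxD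
    (fun i hi => (hxD i hi).trans (hterm (l i) (hl i)))
  · have := le_min (hl i) (by positivity : 0 ≤ 2 * rI)
    split_ifs <;> positivity
  · split_ifs
    exacts [le_rfl, hmin_le i]

theorem stmt4 (n : ℕ) (hn : 1 ≤ n) (rI r0 v1 v2 wI wV : ℝ)
    (hr0 : 0 < r0) (hrIr0 : r0 < rI) (hv1 : 0 < v1) (hv2 : 0 < v2)
    (hwV : 0 < wV) (hwI : 0 < wI)
    (hwIle : wI ≤ r0 * wV * v2 / (rI * (v1 + v2)))
    (l : ℕ → ℝ) (hl : ∀ i, 0 ≤ l i) :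
    Feasible n l
      (fun i => if i = n then 2 * rI / v2 * wI else min (l i) (2 * rI) / v2 * wI)
      (fun i => if i = n then 2 * rI / v2 * wI else min (l i) (2 * rI) / v2 * wI)
      rI r0 v1 v2 wI wV :=
  stmt4_general n rI r0 v1 v2 wI wV hr0 hrIr0 hv1 hv2 hwV hwI hwIle l hl
end

section
/- The assignment $D_i = \frac{\min\{l_i, 2r_I\}}{v_2}w_I$, $Y_i = \frac{\min\{l_i, 2r_0\}}{v_1+v_2}w_V$ for $i=1,\dots,n-1$, and $D_n = \frac{2r_I}{v_2}w_I$, $Y_n = \frac{2r_0}{v_1+v_2}w_V$, is feasible for the linear program whenever $w_I \ge \frac{w_V v_2}{v_1+v_2}$ and $r_I > r_0 > 0$. -/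
open Finset

/-- The paper's `D i` and `Y i` are `capped n l (2 * rI) i / v2 * wI` and
`capped n l (2 * r0) i / (v1 + v2) * wV`. -/
def capped (n : ℕ) (l : ℕ → ℝ) (a : ℝ) (i : ℕ) : ℝ :=
  if i = n then a else min (l i) a

section Capped

variable {n : ℕ} {l : ℕ → ℝ} {a b : ℝ}

lemma ite_div_mul_eq_capped (c w : ℝ) :
    (fun i => if i = n then a / c * w else min (l i) a / c * w) =
      fun i => capped n l a i / c * w :=
  funext fun _ => (apply_ite (· / c * w) _ _ _).symm

lemma capped_nonneg (hl : ∀ i, 0 ≤ l i) (ha : 0 ≤ a) (i : ℕ) : 0 ≤ capped n l a i := by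
  unfold capped
  split_ifs
  exacts [ha, le_min (hl i) ha]

lemma capped_le (i : ℕ) : capped n l a i ≤ a := by
  unfold capped
  split_ifs
  exacts [le_rfl, min_le_right _ _]

lemma capped_mono (hab : a ≤ b) (i : ℕ) : capped n l a i ≤ capped n l b i := by
  unfold capped
  split_ifs
  exacts [hab, min_le_min_left _ hab]

lemma sum_Icc_capped_le {k₁ k₂ : ℕ} (hk : k₁ ≤ k₂) (hk₂ : k₂ ≤ n) :
    ∑ i ∈ Icc k₁ k₂, capped n l a i ≤ ∑ i ∈ Ico k₁ k₂, min (l i) a + a := by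
  rw [← Ico_add_one_right_eq_Icc, sum_Ico_succ_top hk]
  gcongr ?_ + ?_
  · refine (sum_congr rfl fun i hi => if_neg ?_).le
    rw [mem_Ico] at hi
    omega
  · exact capped_le k₂

lemma sum_Icc_capped_div_mul_le {c w : ℝ} (hc : 0 ≤ c) (hw : 0 ≤ w) {k₁ k₂ : ℕ}
    (hk : k₁ ≤ k₂) (hk₂ : k₂ ≤ n) :
    ∑ i ∈ Icc k₁ k₂, capped n l a i / c * w ≤ (∑ i ∈ Ico k₁ k₂, min (l i) a + a) / c * w := by
  rw [← sum_mul, ← sum_div]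
  gcongr
  exact sum_Icc_capped_le hk hk₂

end Capped

theorem stmt5_general (n : ℕ) (rI r0 v1 v2 wI wV : ℝ)
    (hr0 : 0 < r0) (hrIr0 : r0 < rI) (hv1 : 0 < v1) (hv2 : 0 < v2)
    (hwV : 0 < wV) (hwI : 0 < wI)
    (hwIge : wV * v2 / (v1 + v2) ≤ wI)
    (l : ℕ → ℝ) (hl : ∀ i, 0 ≤ l i) :
    Feasible n l
      (fun i => if i = n then 2 * rI / v2 * wI else min (l i) (2 * rI) / v2 * wI)
      (fun i => if i = n then 2 * r0 / (v1 + v2) * wV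
                else min (l i) (2 * r0) / (v1 + v2) * wV)
      rI r0 v1 v2 wI wV := by
  have hrI : 0 < rI := hr0.trans hrIr0
  have hv : 0 < v1 + v2 := by positivity
  have hrate : wV / (v1 + v2) ≤ wI / v2 := by
    rwa [le_div_iff₀ hv2, div_mul_eq_mul_div]
  have hcapI := capped_nonneg (n := n) hl (by positivity : 0 ≤ 2 * rI)
  have hcap0 := capped_nonneg (n := n) hl (by positivity : 0 ≤ 2 * r0)
  rw [ite_div_mul_eq_capped, ite_div_mul_eq_capped]
  refine ⟨fun i _ _ => ⟨?_, ?_⟩, fun k₁ k₂ _ hk hk₂ => ?_, fun i _ _ => ⟨?_, ?_⟩,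
    fun i _ _ => ?_, fun k₁ k₂ _ hk hk₂ => ?_⟩
  · have := hcapI i; positivity
  · dsimp only; gcongr; exact capped_le i
  · exact sum_Icc_capped_div_mul_le hv2.le hwI.le hk hk₂
  · have := hcap0 i; positivity
  · dsimp only; gcongr; exact capped_le i
  · calc capped n l (2 * r0) i / (v1 + v2) * wV = capped n l (2 * r0) i * (wV / (v1 + v2)) := by
          ring
      _ ≤ capped n l (2 * rI) i * (wI / v2) :=
          mul_le_mul (capped_mono (by linarith) i) hrate (by positivity) (hcapI i)
      _ = capped n l (2 * rI) i / v2 * wI := by ring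
  · exact sum_Icc_capped_div_mul_le hv.le hwV.le hk hk₂

theorem stmt5 (n : ℕ) (hn : 1 ≤ n) (rI r0 v1 v2 wI wV : ℝ)
    (hr0 : 0 < r0) (hrIr0 : r0 < rI) (hv1 : 0 < v1) (hv2 : 0 < v2)
    (hwV : 0 < wV) (hwI : 0 < wI)
    (hwIge : wV * v2 / (v1 + v2) ≤ wI)
    (l : ℕ → ℝ) (hl : ∀ i, 0 ≤ l i) :
    Feasible n l
      (fun i => if i = n then 2 * rI / v2 * wI else min (l i) (2 * rI) / v2 * wI)
      (fun i => if i = n then 2 * r0 / (v1 + v2) * wV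
                else min (l i) (2 * r0) / (v1 + v2) * wV)
      rI r0 v1 v2 wI wV :=
  stmt5_general n rI r0 v1 v2 wI wV hr0 hrIr0 hv1 hv2 hwV hwI hwIge l hl
end

section
/- If $0 < w_I \le \frac{r_0 w_V v_2}{r_I(v_1+v_2)}$ and $r_I > r_0 > 0$, then for every real $l \ge 0$: $\frac{\min\{l, 2r_I\}}{v_2} w_I \le \frac{\min\{l, 2r_0\}}{v_1+v_2} w_V$. -/
lemma min_mul_le_min_mul_s15 {α : Type*} [CommSemiring α] [LinearOrder α] [IsOrderedRing α]
    {l c a b : α} (hl : 0 ≤ l) (ha : 0 ≤ a) (hab : a ≤ b) :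
    min l (c * b) * a ≤ min l (c * a) * b := by
  rw [min_mul_of_nonneg _ _ ha, min_mul_of_nonneg _ _ (ha.trans hab)]
  exact min_le_min (mul_le_mul_of_nonneg_left hab hl) (le_of_eq (mul_right_comm c b a))

theorem stmt15_general (rI r0 v1 v2 wI wV l : ℝ)
    (hr0 : 0 < r0) (hrIr0 : r0 < rI) (hv1 : 0 < v1) (hv2 : 0 < v2)
    (hwV : 0 < wV)
    (hwIle : wI ≤ r0 * wV * v2 / (rI * (v1 + v2))) (hl : 0 ≤ l) :
    min l (2 * rI) / v2 * wI ≤ min l (2 * r0) / (v1 + v2) * wV := by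
  have hrI : 0 < rI := hr0.trans hrIr0
  calc min l (2 * rI) / v2 * wI
      ≤ min l (2 * rI) / v2 * (r0 * wV * v2 / (rI * (v1 + v2))) := by gcongr
    _ = min l (2 * rI) * r0 / rI * (wV / (v1 + v2)) := by field_simp
    _ ≤ min l (2 * r0) * (wV / (v1 + v2)) := by
      gcongr
      rw [div_le_iff₀ hrI]
      exact min_mul_le_min_mul_s15 hl hr0.le hrIr0.le
    _ = min l (2 * r0) / (v1 + v2) * wV := by ring

theorem stmt15 (rI r0 v1 v2 wI wV l : ℝ)
    (hr0 : 0 < r0) (hrIr0 : r0 < rI) (hv1 : 0 < v1) (hv2 : 0 < v2)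
    (hwI : 0 < wI) (hwV : 0 < wV)
    (hwIle : wI ≤ r0 * wV * v2 / (rI * (v1 + v2))) (hl : 0 ≤ l) :
    min l (2 * rI) / v2 * wI ≤ min l (2 * r0) / (v1 + v2) * wV :=
  stmt15_general rI r0 v1 v2 wI wV l hr0 hrIr0 hv1 hv2 hwV hwIle hl
end
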